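/- Suppose the design points form the equally-spaced lattice {x^(1),…,x^(n)} = Π_{k=1}^d {0, 1/n_k, …, (n_k−1)/n_k} with integers n_k ≥ 2. If f ∈ F^d_TCP, then V_design(f) ≤ Σ_{∅≠S⊆[d]} [ D_S^0(f) − D_S^1(f) ], where D_S^0(f) is the divided difference of f of order 1_S at the points (0, 1/n_k) in each coordinate k ∈ S and the point 0 in each coordinate k ∉ S, and D_S^1(f) is the divided difference of f of order 1_S at the points ((n_k−1)/n_k, 1) in each coordinate k ∈ S and the point 0 in each coordinate k ∉ S. -/

import Mathlib

open MeasureTheory ProbabilityTheory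

noncomputable section

/-- The unit cube `[0,1]^ι` inside `ι → ℝ`. -/
def unitCube (ι : Type*) : Set (ι → ℝ) := Set.univ.pi fun _ => Set.Icc (0 : ℝ) 1

/-- The (tensor-product) divided difference of `f` of order `p` at the points `x`. -/
def mvDivDiff {ι : Type*} [Fintype ι] [DecidableEq ι] (f : (ι → ℝ) → ℝ) (p : ι → ℕ)
    (x : (k : ι) → Fin (p k + 1) → ℝ) : ℝ :=
  ∑ i : (k : ι) → Fin (p k + 1),
    f (fun k => x k (i k)) /
      ∏ k, ∏ j ∈ Finset.univ.erase (i k), (x k (i k) - x k j)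

/-- `F^d_TCP`: total concavity in the sense of Popoviciu, i.e. all divided differences
of order `p ∈ {0,1,2}^d` with `max_k p_k = 2` are nonpositive. -/
def MemTCP (d : ℕ) (f : (Fin d → ℝ) → ℝ) : Prop :=
  ∀ p : Fin d → ℕ, (∀ k, p k ≤ 2) → (∃ k, p k = 2) →
    ∀ x : (k : Fin d) → Fin (p k + 1) → ℝ,
      (∀ k, StrictMono (x k)) → (∀ k j, x k j ∈ Set.Icc (0 : ℝ) 1) →
      mvDivDiff f p x ≤ 0

/-- The collection of subsets `S ⊆ [d]` with `1 ≤ |S| ≤ s`. -/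
def smallSets (d s : ℕ) : Finset (Finset (Fin d)) :=
  Finset.univ.filter fun S => 1 ≤ S.card ∧ S.card ≤ s

/-- The set `[0,1)^{|S|} \ {0}`, viewed inside `Fin d → ℝ` (coordinates in `S`). -/
def tcSupport (d : ℕ) (S : Finset (Fin d)) : Set (Fin d → ℝ) :=
  {t | (∀ j ∈ S, t j ∈ Set.Ico (0 : ℝ) 1) ∧ ∃ j ∈ S, t j ≠ 0}

/-- A representation `(β₀, (β_S), (ν_S))` of a totally concave function:
a constant, coefficients for the multilinear terms, and finite Borel measures
`ν_S` on `[0,1)^{|S|} \ {0}`. -/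
structure TCRep (d : ℕ) where
  β0 : ℝ
  β : Finset (Fin d) → ℝ
  ν : Finset (Fin d) → Measure (Fin d → ℝ)
  finite : ∀ S, IsFiniteMeasure (ν S)
  support : ∀ S, ν S (tcSupport d S)ᶜ = 0

/-- The function represented by `r`, keeping interactions of order at most `s`. -/
def TCRep.toFun {d : ℕ} (s : ℕ) (r : TCRep d) (x : Fin d → ℝ) : ℝ :=
  r.β0 + ∑ S ∈ smallSets d s, r.β S * ∏ j ∈ S, x j
    - ∑ S ∈ smallSets d s, ∫ t, (∏ j ∈ S, max (x j - t j) 0) ∂(r.ν S)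

/-- The total size `V` of the measures in the representation `r`. -/
def TCRep.V {d : ℕ} (s : ℕ) (r : TCRep d) : ℝ :=
  ∑ S ∈ smallSets d s, (r.ν S Set.univ).toReal

/-- Membership in the class `F^{d,s}_TC` of totally concave functions on `[0,1]^d`
with interactions of order at most `s`. -/
def MemTC (d s : ℕ) (f : (Fin d → ℝ) → ℝ) : Prop :=
  ∃ r : TCRep d, ∀ x ∈ unitCube (Fin d), f x = r.toFun s x

/-- Membership in `F^{d,s}_TC` via a representation of total measure size at most `Vbd`. -/
def MemTCV (d s : ℕ) (Vbd : ℝ) (f : (Fin d → ℝ) → ℝ) : Prop :=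
  ∃ r : TCRep d, (∀ x ∈ unitCube (Fin d), f x = r.toFun s x) ∧ r.V s ≤ Vbd

/-- The interaction restriction condition of order `s`. -/
def InteractionRestriction (d s : ℕ) (f : (Fin d → ℝ) → ℝ) : Prop :=
  ∀ S : Finset (Fin d), s < S.card →
    ∀ x y : Fin d → ℝ, (∀ k ∈ S, 0 ≤ x k ∧ x k < y k ∧ y k ≤ 1) →
      ∑ R ∈ S.powerset, (-1 : ℝ) ^ (S.card - R.card) *
        f (fun k => if k ∈ R then y k else if k ∈ S then x k else 0) = 0

/-- The regularity condition at `0` for the subset `S`: the relevant divided differences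
near the origin are bounded above. -/
def RegZero (d : ℕ) (f : (Fin d → ℝ) → ℝ) (S : Finset (Fin d)) : Prop :=
  ∃ M : ℝ, ∀ t : Fin d → ℝ, (∀ k ∈ S, t k ∈ Set.Ioc (0 : ℝ) 1) →
    (∏ k ∈ S, t k)⁻¹ *
      ∑ R ∈ S.powerset, (-1 : ℝ) ^ (S.card - R.card) *
        f (fun k => if k ∈ R then t k else 0) ≤ M

/-- The regularity condition at `1` for the subset `S`: the relevant divided differences
near the far corner are bounded below. -/
def RegOne (d : ℕ) (f : (Fin d → ℝ) → ℝ) (S : Finset (Fin d)) : Prop :=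
  ∃ M : ℝ, ∀ t : Fin d → ℝ, (∀ k ∈ S, t k ∈ Set.Ico (0 : ℝ) 1) →
    M ≤ (∏ k ∈ S, (1 - t k))⁻¹ *
      ∑ R ∈ S.powerset, (-1 : ℝ) ^ (S.card - R.card) *
        f (fun k => if k ∈ R then 1 else if k ∈ S then t k else 0)

/-- Entire monotonicity: all divided differences of order `p ∈ {0,1}^ι \ {0}`
are nonnegative. -/
def EntirelyMonotone {ι : Type*} [Fintype ι] [DecidableEq ι] (g : (ι → ℝ) → ℝ) : Prop :=
  ∀ p : ι → ℕ, (∀ k, p k ≤ 1) → (∃ k, p k = 1) →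
    ∀ x : (k : ι) → Fin (p k + 1) → ℝ,
      (∀ k, StrictMono (x k)) → (∀ k j, x k j ∈ Set.Icc (0 : ℝ) 1) →
      0 ≤ mvDivDiff g p x

/-- Coordinate-wise right-continuity on the unit cube. -/
def CwRightCont {ι : Type*} [DecidableEq ι] (g : (ι → ℝ) → ℝ) : Prop :=
  ∀ x : ι → ℝ, (∀ k, x k ∈ Set.Icc (0 : ℝ) 1) → ∀ k : ι,
    ContinuousWithinAt (fun u => g (Function.update x k u)) (Set.Icc (x k) 1) (x k)

/-- Coordinate-wise left-continuity at points of the cube whose `k`-th coordinate is `1`,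
with respect to that coordinate. -/
def CwLeftContAtOne {ι : Type*} [DecidableEq ι] (g : (ι → ℝ) → ℝ) : Prop :=
  ∀ x : ι → ℝ, (∀ k, x k ∈ Set.Icc (0 : ℝ) 1) → ∀ k : ι, x k = 1 →
    ContinuousWithinAt (fun u => g (Function.update x k u)) (Set.Icc (0 : ℝ) 1) (x k)

/-- `t` belongs to the lattice `L_S` generated by the design points `x`
(extended by `0` in the coordinates outside `S`). -/
def InLattice {d n : ℕ} (x : Fin n → Fin d → ℝ) (S : Finset (Fin d)) (t : Fin d → ℝ) : Prop :=
  (∀ j ∈ S, t j = 0 ∨ ∃ i, t j = x i j) ∧ (∃ j ∈ S, t j ≠ 0) ∧ ∀ j ∉ S, t j = 0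

/-- The finite-dimensional class of functions built from hinge functions with knots in the
lattices `L_S` (nonnegative coefficients on the hinge terms). -/
def MemDiscrete (d s : ℕ) {n : ℕ} (x : Fin n → Fin d → ℝ) (f : (Fin d → ℝ) → ℝ) : Prop :=
  ∃ (β0 : ℝ) (β : Finset (Fin d) → ℝ)
    (T : Finset (Fin d) → Finset (Fin d → ℝ)) (c : Finset (Fin d) → (Fin d → ℝ) → ℝ),
    (∀ S ∈ smallSets d s, ∀ t ∈ T S, InLattice x S t) ∧
    (∀ S ∈ smallSets d s, ∀ t ∈ T S, 0 ≤ c S t) ∧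
    ∀ z ∈ unitCube (Fin d),
      f z = β0 + ∑ S ∈ smallSets d s, β S * ∏ j ∈ S, z j
        - ∑ S ∈ smallSets d s, ∑ t ∈ T S, c S t * ∏ j ∈ S, max (z j - t j) 0

/-- The point of the equally spaced lattice design indexed by `i`. -/
def latticePoint {d : ℕ} (nk : Fin d → ℕ) (i : ∀ k, Fin (nk k)) : Fin d → ℝ :=
  fun k => (i k : ℝ) / (nk k)

/-- `V_design(f)`: the infimum of `V(g)` over all totally concave `g` agreeing with `f`
at the design points. -/
def Vdesign (d : ℕ) {ι : Type*} (pts : ι → Fin d → ℝ) (f : (Fin d → ℝ) → ℝ) : ℝ :=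
  sInf {v : ℝ | ∃ r : TCRep d, (∀ i, r.toFun d (pts i) = f (pts i)) ∧ v = r.V d}

/-- `f` is a continuous rectangular piecewise multi-affine function (interaction order `≤ s`)
with respect to an axis-aligned grid partition of `[0,1]^d` into `m` rectangles. -/
def IsRectPartition (d s : ℕ) (f : (Fin d → ℝ) → ℝ) (m : ℕ) : Prop :=
  ContinuousOn f (unitCube (Fin d)) ∧
  ∃ (mk : Fin d → ℕ) (u : (k : Fin d) → Fin (mk k + 1) → ℝ),
    (∀ k, StrictMono (u k)) ∧ (∀ k, u k 0 = 0) ∧ (∀ k, u k (Fin.last (mk k)) = 1) ∧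
    m = ∏ k, mk k ∧
    ∀ j : (k : Fin d) → Fin (mk k),
      ∃ (c0 : ℝ) (c : Finset (Fin d) → ℝ),
        ∀ x : Fin d → ℝ,
          (∀ k, x k ∈ Set.Icc (u k (j k).castSucc) (u k (j k).succ)) →
          f x = c0 + ∑ S ∈ smallSets d s, c S * ∏ k ∈ S, x k

/-! On the grid `{0, 1/n_k, …, 1}^d`, `f` is interpolated exactly by products of the univariate
hinges `1` and `(x_k - j/n_k)_+`, `j < n_k`. The coefficient of such a product is a positive
multiple of a divided difference of `f` on consecutive grid points, of order `0`, `1` or `2` in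
coordinate `k` according as the factor is `1`, the hinge at `0`, or a hinge at an interior knot.
So total concavity makes every coefficient with an interior knot nonpositive: these are the atoms
of the measures `ν_S`, while the hinges at `0` give the multilinear terms. Summing the univariate
hinge coefficients over all knots telescopes to the slope on the last cell, hence the mass of
`ν_S` is `D_S^0(f) - D_S^1(f)`. The interpolant agrees with `f` on the design, so it bounds
`V_design(f)`. -/

open Finset

section Weights

variable {ι : Type*} [Fintype ι] [DecidableEq ι]

def pushWeight {α β : Type*} [Fintype α] [DecidableEq β] (e : α → β) (v : α → ℝ) (b : β) : ℝ :=
  ∑ a, if e a = b then v a else 0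

theorem sum_prod_pushWeight_mul {α β : ι → Type*} [∀ k, Fintype (α k)] [∀ k, Fintype (β k)]
    [∀ k, DecidableEq (β k)] (e : ∀ k, α k → β k) (v : ∀ k, α k → ℝ) (F : (∀ k, β k) → ℝ) :
    ∑ b : ∀ k, β k, (∏ k, pushWeight (e k) (v k) (b k)) * F b =
      ∑ a : ∀ k, α k, (∏ k, v k (a k)) * F fun k => e k (a k) := by
  simp_rw [pushWeight, prod_univ_sum, Fintype.piFinset_univ, sum_mul]
  rw [sum_comm]
  refine sum_congr rfl fun a _ => ?_
  simp_rw [prod_ite_zero, mem_univ, true_implies, ite_mul, zero_mul]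
  simp only [← funext_iff]
  rw [sum_ite_eq]
  simp

def divDiffWeight {p : ℕ} (x : Fin (p + 1) → ℝ) (i : Fin (p + 1)) : ℝ :=
  (∏ j ∈ univ.erase i, (x i - x j))⁻¹

theorem mvDivDiff_eq_sum (f : (ι → ℝ) → ℝ) (p : ι → ℕ) (x : (k : ι) → Fin (p k + 1) → ℝ) :
    mvDivDiff f p x =
      ∑ i : (k : ι) → Fin (p k + 1), (∏ k, divDiffWeight (x k) (i k)) * f fun k => x k (i k) := by
  simp only [mvDivDiff, divDiffWeight, prod_inv_distrib, div_eq_inv_mul]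

theorem sum_prod_pushWeight_mul_eq_mvDivDiff {β : ι → Type*} [∀ k, Fintype (β k)]
    [∀ k, DecidableEq (β k)] (f : (ι → ℝ) → ℝ) (p : ι → ℕ) (e : (k : ι) → Fin (p k + 1) → β k)
    (pt : (k : ι) → β k → ℝ) (C : ι → ℝ) :
    ∑ b : ∀ k, β k,
        (∏ k, pushWeight (e k) (fun i => C k * divDiffWeight (fun i => pt k (e k i)) i) (b k)) *
          f (fun k => pt k (b k)) =
      (∏ k, C k) * mvDivDiff f p fun k i => pt k (e k i) := by
  rw [sum_prod_pushWeight_mul, mvDivDiff_eq_sum, mul_sum]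
  simp only [prod_mul_distrib, mul_assoc]

theorem sum_coeff_mul_prod_eq_of_biorthogonal {γ β : ι → Type*} [∀ k, Fintype (γ k)]
    [∀ k, Fintype (β k)] [∀ k, DecidableEq (β k)] (W Φ : ∀ k, γ k → β k → ℝ)
    (hWΦ : ∀ k a i, ∑ o, W k o a * Φ k o i = if a = i then 1 else 0)
    (F : (∀ k, β k) → ℝ) (i : ∀ k, β k) :
    ∑ m : ∀ k, γ k, (∑ b : ∀ k, β k, (∏ k, W k (m k) (b k)) * F b) * ∏ k, Φ k (m k) (i k) =
      F i := by
  have hprod (b : ∀ k, β k) :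
      ∑ m : ∀ k, γ k, ∏ k, W k (m k) (b k) * Φ k (m k) (i k) = if b = i then 1 else 0 := by
    rw [← Fintype.piFinset_univ,
      ← prod_univ_sum (fun k => (univ : Finset (γ k))) fun k o => W k o (b k) * Φ k o (i k)]
    simp_rw [hWΦ, prod_ite_zero, mem_univ, true_implies, prod_const_one, ← funext_iff]
  simp_rw [sum_mul]
  rw [sum_comm]
  have hfactor (b : ∀ k, β k) :
      ∑ m : ∀ k, γ k, (∏ k, W k (m k) (b k)) * F b * ∏ k, Φ k (m k) (i k) =
        F b * ∑ m : ∀ k, γ k, ∏ k, W k (m k) (b k) * Φ k (m k) (i k) := by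
    rw [mul_sum]
    refine sum_congr rfl fun m _ => ?_
    rw [prod_mul_distrib]
    ring
  simp_rw [hfactor, hprod]
  simp

end Weights

section Profiles

variable {ι : Type*} [Fintype ι] [DecidableEq ι] {α : ι → Type*} [∀ k, Fintype (α k)]

def optionsOn (S : Finset ι) (k : ι) : Finset (Option (α k)) :=
  if k ∈ S then univ.map Function.Embedding.some else {none}

def optionFiber (S : Finset ι) : Finset (∀ k, Option (α k)) :=
  Fintype.piFinset (optionsOn S)

theorem mem_optionFiber {S : Finset ι} {m : ∀ k, Option (α k)} :
    m ∈ optionFiber S ↔ ∀ k, ((m k).isSome ↔ k ∈ S) := by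
  refine Fintype.mem_piFinset.trans (forall_congr' fun k => ?_)
  unfold optionsOn
  split_ifs with hk <;> cases m k <;> simp [hk]

theorem sum_sum_optionFiber {M : Type*} [AddCommMonoid M] (g : (∀ k, Option (α k)) → M) :
    ∑ S : Finset ι, ∑ m ∈ optionFiber S, g m = ∑ m, g m := by
  rw [← sum_fiberwise univ (fun m : ∀ k, Option (α k) => univ.filter fun k => (m k).isSome)]
  refine sum_congr rfl fun S _ => sum_congr ?_ fun _ _ => rfl
  ext m
  simp [mem_optionFiber, Finset.ext_iff]

end Profiles

section GridLine

variable (n : ℕ)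

def gridPt (b : Fin (n + 1)) : ℝ := (b : ℝ) / n

def gridWindow (t p : ℕ) (h : t + p ≤ n) (i : Fin (p + 1)) : Fin (n + 1) :=
  ⟨t + i, by omega⟩

def slopeWeight (t : ℕ) (b : Fin (n + 1)) : ℝ :=
  n * ((if (b : ℕ) = t + 1 then 1 else 0) - if (b : ℕ) = t then 1 else 0)

/-- The coefficient functionals dual to `hingeBasis`: `slopeWeight n t` is the divided difference
at `t/n, (t+1)/n`, and the hinge at an interior knot `j/n` gets the jump of the slope there. -/
def hingeWeightAt : ℕ → Fin (n + 1) → ℝ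
  | 0 => slopeWeight n 0
  | j + 1 => slopeWeight n (j + 1) - slopeWeight n j

def hingeWeight : Option (Fin n) → Fin (n + 1) → ℝ
  | none => fun b => if (b : ℕ) = 0 then 1 else 0
  | some j => hingeWeightAt n j

def hingeBasis : Option (Fin n) → Fin (n + 1) → ℝ
  | none => fun _ => 1
  | some j => fun b => max (gridPt n b - j / n) 0

variable {n}

theorem gridPt_mem_Icc (b : Fin (n + 1)) : gridPt n b ∈ Set.Icc (0 : ℝ) 1 :=
  ⟨by unfold gridPt; positivity, div_le_one_of_le₀ (by exact_mod_cast b.is_le) n.cast_nonneg⟩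

/- The window lemmas take the order `p` as a variable with an equation, so that they apply to
orders such as `if k ∈ S then 1 else 0` occurring inside the dependent type `Fin (p + 1)`. -/

theorem pushWeight_gridWindow_of_eq_zero {t p : ℕ} (h : t + p ≤ n) (hp : p = 0) :
    pushWeight (gridWindow n t p h) (divDiffWeight fun i => gridPt n (gridWindow n t p h i)) =
      fun b : Fin (n + 1) => if (b : ℕ) = t then 1 else 0 := by
  subst hp
  funext b
  simp [pushWeight, divDiffWeight, gridWindow, Fin.ext_iff, eq_comm]

theorem pushWeight_gridWindow_of_eq_one {t p : ℕ} (h : t + p ≤ n) (hp : p = 1) :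
    pushWeight (gridWindow n t p h) (divDiffWeight fun i => gridPt n (gridWindow n t p h i)) =
      slopeWeight n t := by
  subst hp
  have hn : (n : ℝ) ≠ 0 := by norm_cast; omega
  funext b
  have e0 : univ.erase (0 : Fin (1 + 1)) = {1} := by decide
  have e1 : univ.erase (1 : Fin (1 + 1)) = {0} := by decide
  rw [pushWeight, Fin.sum_univ_two]
  simp only [divDiffWeight, e0, e1, prod_singleton, gridWindow, gridPt, slopeWeight, Fin.ext_iff,
    Fin.val_zero, Fin.val_one, add_zero]
  split_ifs <;> first | omega | (push_cast; field_simp; ring)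

theorem pushWeight_gridWindow_of_eq_two {t p : ℕ} (h : t + p ≤ n) (hp : p = 2) :
    pushWeight (gridWindow n t p h)
        (fun i => 2 / n * divDiffWeight (fun i => gridPt n (gridWindow n t p h i)) i) =
      slopeWeight n (t + 1) - slopeWeight n t := by
  subst hp
  have hn : (n : ℝ) ≠ 0 := by norm_cast; omega
  funext b
  have e0 : univ.erase (0 : Fin (2 + 1)) = {1, 2} := by decide
  have e1 : univ.erase (1 : Fin (2 + 1)) = {0, 2} := by decide
  have e2 : univ.erase (2 : Fin (2 + 1)) = {0, 1} := by decide
  rw [pushWeight, Fin.sum_univ_three]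
  simp only [divDiffWeight, e0, e1, e2]
  rw [prod_pair (by decide), prod_pair (by decide), prod_pair (by decide)]
  simp only [gridWindow, gridPt, slopeWeight, Pi.sub_apply, Fin.ext_iff, Fin.val_zero, Fin.val_one,
    Fin.val_two, add_zero]
  split_ifs <;> first | omega | (push_cast; field_simp; ring)

theorem sum_range_hingeWeightAt (b : Fin (n + 1)) (m : ℕ) :
    ∑ j ∈ range (m + 1), hingeWeightAt n j b = slopeWeight n m b := by
  induction m with
  | zero => simp [hingeWeightAt]
  | succ m ih => rw [sum_range_succ, ih, hingeWeightAt, Pi.sub_apply]; ring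

theorem sum_hingeWeight_some (hn : 0 < n) (b : Fin (n + 1)) :
    ∑ j : Fin n, hingeWeight n (some j) b = slopeWeight n (n - 1) b := by
  obtain ⟨m, rfl⟩ : ∃ m, n = m + 1 := ⟨n - 1, by omega⟩
  simp only [hingeWeight]
  rw [Fin.sum_univ_eq_sum_range (fun j => hingeWeightAt (m + 1) j b), sum_range_hingeWeightAt,
    Nat.add_sub_cancel]

theorem sum_range_hingeWeightAt_mul (b : Fin (n + 1)) (φ : ℕ → ℝ) (m : ℕ) :
    ∑ j ∈ range (m + 1), hingeWeightAt n j b * φ j =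
      ∑ j ∈ range (m + 1), slopeWeight n j b * (φ j - φ (j + 1)) +
        slopeWeight n m b * φ (m + 1) := by
  induction m with
  | zero => simp [hingeWeightAt]; ring
  | succ m ih =>
    rw [sum_range_succ, ih, sum_range_succ _ (m + 1)]
    simp only [hingeWeightAt, Pi.sub_apply]
    ring

theorem hinge_sub_hinge_succ (hn : 0 < n) (i : Fin (n + 1)) (j : ℕ) :
    max (gridPt n i - j / n) 0 - max (gridPt n i - (j + 1 : ℕ) / n) 0 =
      if j < i then 1 / (n : ℝ) else 0 := by
  have hn' : (0 : ℝ) < n := by exact_mod_cast hn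
  simp only [gridPt]
  split_ifs with hj
  · have hj' : ((j + 1 : ℕ) : ℝ) ≤ (i : ℕ) := by exact_mod_cast hj
    rw [max_eq_left, max_eq_left]
    · push_cast; ring
    · rw [sub_nonneg]; gcongr
    · rw [sub_nonneg]; gcongr
  · have hj' : ((i : ℕ) : ℝ) ≤ j := by exact_mod_cast not_lt.mp hj
    rw [max_eq_right, max_eq_right]
    · ring
    · rw [sub_nonpos]; gcongr; linarith
    · rw [sub_nonpos]; gcongr

theorem slopeWeight_mul_hinge_sub_hinge_succ (hn : 0 < n) (a i : Fin (n + 1)) (j : ℕ) :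
    slopeWeight n j a * (max (gridPt n i - j / n) 0 - max (gridPt n i - (j + 1 : ℕ) / n) 0) =
      if j < i then (if (a : ℕ) = j + 1 then 1 else 0) - (if (a : ℕ) = j then 1 else 0) else 0 := by
  have hn' : (n : ℝ) ≠ 0 := by exact_mod_cast hn.ne'
  rw [hinge_sub_hinge_succ hn, slopeWeight]
  split_ifs <;> field_simp <;> ring

theorem sum_hingeWeight_mul_hingeBasis (a i : Fin (n + 1)) :
    ∑ o, hingeWeight n o a * hingeBasis n o i = if a = i then 1 else 0 := by
  rcases n with _ | m
  · obtain rfl := Fin.eq_zero a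
    obtain rfl := Fin.eq_zero i
    rw [Fintype.sum_option]
    simp [hingeWeight, hingeBasis]
  have hlast : max (gridPt (m + 1) i - ((m + 1 : ℕ) : ℝ) / (m + 1 : ℕ)) 0 = 0 := by
    rw [div_self (by positivity), max_eq_right (sub_nonpos.mpr (gridPt_mem_Icc i).2)]
  have hrange : (range (m + 1)).filter (· < (i : ℕ)) = range i := by
    ext j; simp only [mem_filter, mem_range]; omega
  rw [Fintype.sum_option]
  simp only [hingeWeight, hingeBasis]
  rw [Fin.sum_univ_eq_sum_range
      (fun j => hingeWeightAt (m + 1) j a * max (gridPt (m + 1) i - j / (m + 1 : ℕ)) 0),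
    sum_range_hingeWeightAt_mul, hlast]
  simp only [slopeWeight_mul_hinge_sub_hinge_succ (Nat.zero_lt_succ m)]
  rw [← sum_filter, hrange,
    sum_range_sub (fun j => if (a : ℕ) = j then (1 : ℝ) else 0), mul_zero, add_zero, mul_one,
    add_sub_cancel]
  simp only [Fin.ext_iff]

theorem exists_hingeWeight_eq_pushWeight (o : Option (Fin n)) :
    ∃ (t p : ℕ) (h : t + p ≤ n) (C : ℝ), 0 ≤ C ∧ p ≤ 2 ∧
      (∀ j : Fin n, o = some j → (j : ℕ) ≠ 0 → p = 2) ∧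
      hingeWeight n o = pushWeight (gridWindow n t p h)
        (fun i => C * divDiffWeight (fun i => gridPt n (gridWindow n t p h i)) i) := by
  rcases o with _ | ⟨_ | j, hj⟩
  · refine ⟨0, 0, n.zero_le, 1, zero_le_one, by norm_num, by simp, ?_⟩
    simp_rw [one_mul, pushWeight_gridWindow_of_eq_zero _ rfl]
    rfl
  · refine ⟨0, 1, by omega, 1, zero_le_one, by norm_num, by simp, ?_⟩
    simp_rw [one_mul, pushWeight_gridWindow_of_eq_one _ rfl]
    rfl
  · exact ⟨j, 2, by omega, 2 / n, by positivity, le_rfl, fun _ _ _ => rfl,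
      (pushWeight_gridWindow_of_eq_two _ rfl).symm⟩

theorem strictMono_gridPt_gridWindow {t p : ℕ} (h : t + p ≤ n) :
    StrictMono fun i => gridPt n (gridWindow n t p h i) := by
  intro a b hab
  have hab' : (a : ℕ) < b := hab
  have hn : (0 : ℝ) < n := by exact_mod_cast (show 0 < n by omega)
  simp only [gridPt, gridWindow]
  gcongr

end GridLine

section Grid

variable {d : ℕ} (nk : Fin d → ℕ)

def gridPoint (b : ∀ k, Fin (nk k + 1)) : Fin d → ℝ := fun k => gridPt (nk k) (b k)

def hingeCoeff (f : (Fin d → ℝ) → ℝ) (m : ∀ k, Option (Fin (nk k))) : ℝ :=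
  ∑ b : ∀ k, Fin (nk k + 1), (∏ k, hingeWeight (nk k) (m k) (b k)) * f (gridPoint nk b)

def knot (m : ∀ k, Option (Fin (nk k))) : Fin d → ℝ :=
  fun k => (m k).elim 0 fun j => (j : ℝ) / nk k

def hingeAtZero (hn : ∀ k, 0 < nk k) (S : Finset (Fin d)) : ∀ k, Option (Fin (nk k)) :=
  fun k => if k ∈ S then some ⟨0, hn k⟩ else none

variable {nk} (f : (Fin d → ℝ) → ℝ)

theorem sum_hingeCoeff_mul_prod_hingeBasis (i : ∀ k, Fin (nk k + 1)) :
    ∑ m : ∀ k, Option (Fin (nk k)), hingeCoeff nk f m * ∏ k, hingeBasis (nk k) (m k) (i k) =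
      f (gridPoint nk i) :=
  sum_coeff_mul_prod_eq_of_biorthogonal (fun k => hingeWeight (nk k)) (fun k => hingeBasis (nk k))
    (fun _ => sum_hingeWeight_mul_hingeBasis) (fun b => f (gridPoint nk b)) i

theorem hingeCoeff_nonpos {f} (hf : MemTCP d f) {m : ∀ k, Option (Fin (nk k))}
    (hm : ∃ k, ∃ j : Fin (nk k), m k = some j ∧ (j : ℕ) ≠ 0) : hingeCoeff nk f m ≤ 0 := by
  choose t p h C hC hp h2 hW using fun k => exists_hingeWeight_eq_pushWeight (m k)
  have hcoeff : hingeCoeff nk f m = (∏ k, C k) *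
      mvDivDiff f p fun k i => gridPt (nk k) (gridWindow (nk k) (t k) (p k) (h k) i) := by
    simp only [hingeCoeff, hW]
    exact sum_prod_pushWeight_mul_eq_mvDivDiff f p _ (fun k => gridPt (nk k)) C
  obtain ⟨k, j, hkj, hj⟩ := hm
  rw [hcoeff]
  exact mul_nonpos_of_nonneg_of_nonpos (prod_nonneg fun k _ => hC k)
    (hf p hp ⟨k, h2 k j hkj hj⟩ _ (fun k => strictMono_gridPt_gridWindow (h k))
      fun k _ => gridPt_mem_Icc _)

theorem hingeCoeff_hingeAtZero (hn : ∀ k, 0 < nk k) (S : Finset (Fin d)) :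
    hingeCoeff nk f (hingeAtZero nk hn S) =
      mvDivDiff f (fun k => if k ∈ S then 1 else 0) fun k j => (j : ℝ) / nk k := by
  have h (k : Fin d) : 0 + (if k ∈ S then 1 else 0) ≤ nk k := by
    have := hn k
    split_ifs <;> omega
  have hW (k : Fin d) : hingeWeight (nk k) (hingeAtZero nk hn S k) =
      pushWeight (gridWindow (nk k) 0 _ (h k)) fun i =>
        1 * divDiffWeight (fun i => gridPt (nk k) (gridWindow (nk k) 0 _ (h k) i)) i := by
    simp only [one_mul]
    by_cases hk : k ∈ S
    · rw [pushWeight_gridWindow_of_eq_one _ (if_pos hk)]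
      simp [hingeAtZero, hk, hingeWeight, hingeWeightAt]
    · rw [pushWeight_gridWindow_of_eq_zero _ (if_neg hk)]
      simp [hingeAtZero, hk, hingeWeight]
  simp only [hingeCoeff, hW]
  refine (sum_prod_pushWeight_mul_eq_mvDivDiff f _ _ (fun k => gridPt (nk k)) _).trans ?_
  rw [prod_const_one, one_mul]
  simp [gridPt, gridWindow]

theorem sum_optionFiber_hingeCoeff (hn : ∀ k, 0 < nk k) (S : Finset (Fin d)) :
    ∑ m ∈ optionFiber S, hingeCoeff nk f m =
      mvDivDiff f (fun k => if k ∈ S then 1 else 0)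
        fun k j => if k ∈ S then ((nk k : ℝ) - 1 + (j : ℝ)) / nk k else 0 := by
  have h (k : Fin d) : (if k ∈ S then nk k - 1 else 0) + (if k ∈ S then 1 else 0) ≤ nk k := by
    have := hn k
    split_ifs <;> omega
  have hW (k : Fin d) (b : Fin (nk k + 1)) :
      ∑ o ∈ optionsOn (α := fun k => Fin (nk k)) S k, hingeWeight (nk k) o b =
        pushWeight (gridWindow (nk k) _ _ (h k)) (fun i =>
          1 * divDiffWeight (fun i => gridPt (nk k) (gridWindow (nk k) _ _ (h k) i)) i) b := by
    simp only [one_mul, optionsOn]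
    by_cases hk : k ∈ S
    · rw [pushWeight_gridWindow_of_eq_one _ (if_pos hk), if_pos hk, sum_map]
      simp only [Function.Embedding.some_apply]
      rw [sum_hingeWeight_some (hn k), if_pos hk]
    · rw [pushWeight_gridWindow_of_eq_zero _ (if_neg hk), if_neg hk, sum_singleton, if_neg hk]
      rfl
  have hfib (b : ∀ k, Fin (nk k + 1)) :
      ∑ m ∈ optionFiber S, ∏ k, hingeWeight (nk k) (m k) (b k) = ∏ k, pushWeight
        (gridWindow (nk k) _ _ (h k)) (fun i =>
          1 * divDiffWeight (fun i => gridPt (nk k) (gridWindow (nk k) _ _ (h k) i)) i) (b k) := by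
    rw [optionFiber, ← prod_univ_sum (optionsOn S) fun k o => hingeWeight (nk k) o (b k)]
    exact prod_congr rfl fun k _ => hW k (b k)
  simp only [hingeCoeff]
  rw [sum_comm]
  simp_rw [← sum_mul, hfib]
  refine (sum_prod_pushWeight_mul_eq_mvDivDiff f _ _ (fun k => gridPt (nk k)) _).trans ?_
  rw [prod_const_one, one_mul]
  congr 1
  funext k i
  by_cases hk : k ∈ S
  · have : 1 ≤ nk k := hn k
    simp [gridPt, gridWindow, hk, Nat.cast_sub this]
  · have : (i : ℕ) = 0 := by
      have := i.isLt
      simp only [hk, if_false] at this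
      omega
    simp [gridPt, gridWindow, hk, this]

end Grid

section GridRep

variable {d : ℕ} {nk : Fin d → ℕ} (hn : ∀ k, 0 < nk k) (f : (Fin d → ℝ) → ℝ)

/-- Knot `0` lies outside the support of `ν_S`, so the profile with all hinges of `S` at `0` is
carried by `β S` instead. -/
def gridAtoms (S : Finset (Fin d)) : Finset (∀ k, Option (Fin (nk k))) :=
  (optionFiber S).erase (hingeAtZero nk hn S)

theorem hingeAtZero_mem_optionFiber (S : Finset (Fin d)) :
    hingeAtZero nk hn S ∈ optionFiber S := by
  rw [mem_optionFiber]
  intro k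
  by_cases hk : k ∈ S <;> simp [hingeAtZero, hk]

theorem exists_ne_zero_of_mem_gridAtoms {S : Finset (Fin d)} {m : ∀ k, Option (Fin (nk k))}
    (hm : m ∈ gridAtoms hn S) : ∃ k ∈ S, ∃ j : Fin (nk k), m k = some j ∧ (j : ℕ) ≠ 0 := by
  obtain ⟨hne, hmS⟩ := mem_erase.mp hm
  rw [mem_optionFiber] at hmS
  by_contra! hzero
  refine hne (funext fun k => ?_)
  by_cases hk : k ∈ S
  · obtain ⟨j, hj⟩ := Option.isSome_iff_exists.mp ((hmS k).mpr hk)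
    simp [hingeAtZero, hk, hj, Fin.ext_iff, hzero k hk j hj]
  · simp [hingeAtZero, hk, Option.not_isSome_iff_eq_none.mp (mt (hmS k).mp hk)]

theorem knot_mem_tcSupport {S : Finset (Fin d)} {m : ∀ k, Option (Fin (nk k))}
    (hm : m ∈ gridAtoms hn S) : knot nk m ∈ tcSupport d S := by
  obtain ⟨k, hk, j, hkj, hj⟩ := exists_ne_zero_of_mem_gridAtoms hn hm
  refine ⟨fun l hl => ?_, k, hk, ?_⟩
  · obtain ⟨i, hi⟩ :=
      Option.isSome_iff_exists.mp ((mem_optionFiber.mp (mem_of_mem_erase hm) l).mpr hl)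
    simp only [knot, hi, Option.elim]
    exact ⟨by positivity, (div_lt_one (by exact_mod_cast hn l)).mpr (by exact_mod_cast i.isLt)⟩
  · simp only [knot, hkj, Option.elim]
    exact div_ne_zero (by exact_mod_cast hj) (by exact_mod_cast (hn k).ne')

theorem prod_hingeBasis_of_mem_optionFiber {S : Finset (Fin d)} {m : ∀ k, Option (Fin (nk k))}
    (hm : m ∈ optionFiber S) (i : ∀ k, Fin (nk k + 1)) :
    ∏ k, hingeBasis (nk k) (m k) (i k) = ∏ j ∈ S, max (gridPoint nk i j - knot nk m j) 0 := by
  rw [mem_optionFiber] at hm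
  refine (prod_subset (subset_univ S) fun k _ hk => ?_).symm.trans (prod_congr rfl fun k hk => ?_)
  · rw [Option.not_isSome_iff_eq_none.mp (mt (hm k).mp hk)]
    rfl
  · obtain ⟨j, hj⟩ := Option.isSome_iff_exists.mp ((hm k).mpr hk)
    simp [hingeBasis, knot, hj, gridPoint]

def gridRep : TCRep d where
  β0 := hingeCoeff nk f fun _ => none
  β S := hingeCoeff nk f (hingeAtZero nk hn S)
  ν S := ∑ m ∈ gridAtoms hn S, ENNReal.ofReal (-hingeCoeff nk f m) • Measure.dirac (knot nk m)
  finite S := ⟨by simp [ENNReal.sum_lt_top]⟩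
  support S := by
    rw [Measure.finsetSum_apply]
    refine sum_eq_zero fun m hm => ?_
    rw [Measure.smul_apply, Measure.dirac_apply,
      Set.indicator_of_notMem (Set.notMem_compl_iff.mpr (knot_mem_tcSupport hn hm)), smul_zero]

variable {f}

theorem hingeCoeff_nonpos_of_mem_gridAtoms (hf : MemTCP d f) {S : Finset (Fin d)}
    {m : ∀ k, Option (Fin (nk k))} (hm : m ∈ gridAtoms hn S) : hingeCoeff nk f m ≤ 0 :=
  let ⟨k, _, hj⟩ := exists_ne_zero_of_mem_gridAtoms hn hm
  hingeCoeff_nonpos hf ⟨k, hj⟩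

theorem integral_gridRep_ν (hf : MemTCP d f) (S : Finset (Fin d)) (g : (Fin d → ℝ) → ℝ) :
    ∫ t, g t ∂(gridRep hn f).ν S = ∑ m ∈ gridAtoms hn S, -hingeCoeff nk f m * g (knot nk m) := by
  rw [gridRep, integral_finsetSum_measure fun m _ =>
    (integrable_dirac enorm_lt_top).smul_measure ENNReal.ofReal_ne_top]
  refine sum_congr rfl fun m hm => ?_
  rw [integral_smul_measure, integral_dirac, smul_eq_mul,
    ENNReal.toReal_ofReal (neg_nonneg.mpr (hingeCoeff_nonpos_of_mem_gridAtoms hn hf hm))]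

theorem toReal_gridRep_ν_univ (hf : MemTCP d f) (S : Finset (Fin d)) :
    ((gridRep hn f).ν S Set.univ).toReal = ∑ m ∈ gridAtoms hn S, -hingeCoeff nk f m := by
  simpa [integral_const, Measure.real] using integral_gridRep_ν hn hf S fun _ => 1

theorem smallSets_self : smallSets d d = univ.erase ∅ := by
  ext S
  have : #S ≤ d := (card_le_univ S).trans_eq (Fintype.card_fin d)
  simp [smallSets, one_le_card, nonempty_iff_ne_empty, this]

theorem sum_optionFiber_hingeCoeff_mul_prod_hingeBasis (hf : MemTCP d f) (S : Finset (Fin d))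
    (i : ∀ k, Fin (nk k + 1)) :
    ∑ m ∈ optionFiber S, hingeCoeff nk f m * ∏ k, hingeBasis (nk k) (m k) (i k) =
      (gridRep hn f).β S * ∏ j ∈ S, gridPoint nk i j -
        ∫ t, ∏ j ∈ S, max (gridPoint nk i j - t j) 0 ∂(gridRep hn f).ν S := by
  have h0 := hingeAtZero_mem_optionFiber hn S
  have hx : ∏ j ∈ S, gridPoint nk i j = ∏ k, hingeBasis (nk k) (hingeAtZero nk hn S k) (i k) := by
    rw [prod_hingeBasis_of_mem_optionFiber h0]
    refine prod_congr rfl fun j hj => ?_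
    simp [knot, hingeAtZero, hj, (gridPt_mem_Icc (i j)).1, gridPoint]
  rw [integral_gridRep_ν hn hf, ← add_sum_erase _ _ h0, hx]
  simp only [gridRep, gridAtoms, neg_mul, sum_neg_distrib, sub_neg_eq_add]
  congr 1
  refine sum_congr rfl fun m hm => ?_
  rw [prod_hingeBasis_of_mem_optionFiber (mem_of_mem_erase hm)]

theorem gridRep_toFun_gridPoint (hf : MemTCP d f) (i : ∀ k, Fin (nk k + 1)) :
    (gridRep hn f).toFun d (gridPoint nk i) = f (gridPoint nk i) := by
  set G : Finset (Fin d) → ℝ := fun S =>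
    ∑ m ∈ optionFiber S, hingeCoeff nk f m * ∏ k, hingeBasis (nk k) (m k) (i k) with hG
  have hsum : ∑ S, G S = f (gridPoint nk i) := by
    rw [hG, sum_sum_optionFiber]
    exact sum_hingeCoeff_mul_prod_hingeBasis f i
  have hempty : G ∅ = (gridRep hn f).β0 := by
    have : optionFiber (α := fun k => Fin (nk k)) ∅ = {fun _ => none} := by
      ext m
      simp [mem_optionFiber, funext_iff]
    simp [hG, this, hingeBasis, gridRep]
  rw [TCRep.toFun, ← hsum, ← add_sum_erase univ G (mem_univ ∅), ← smallSets_self,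
    sum_congr rfl fun S _ => sum_optionFiber_hingeCoeff_mul_prod_hingeBasis hn hf S i,
    sum_sub_distrib, hempty]
  ring

theorem gridRep_V (hf : MemTCP d f) :
    (gridRep hn f).V d = ∑ S ∈ univ.filter (fun S : Finset (Fin d) => S.Nonempty),
      (mvDivDiff f (fun k => if k ∈ S then 1 else 0) (fun k j => (j : ℝ) / nk k) -
        mvDivDiff f (fun k => if k ∈ S then 1 else 0)
          (fun k j => if k ∈ S then ((nk k : ℝ) - 1 + (j : ℝ)) / nk k else 0)) := by
  rw [TCRep.V, smallSets_self]
  refine sum_congr (by ext S; simp [nonempty_iff_ne_empty]) fun S _ => ?_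
  rw [toReal_gridRep_ν_univ hn hf, ← hingeCoeff_hingeAtZero f hn S,
    ← sum_optionFiber_hingeCoeff f hn S, ← add_sum_erase _ _ (hingeAtZero_mem_optionFiber hn S),
    sum_neg_distrib, gridAtoms]
  ring

end GridRep

/-- **Lemma (simple bound on `V_design`).**
For the equally spaced lattice design and `f ∈ F^d_TCP`,
`V_design(f) ≤ Σ_{∅≠S⊆[d]} [D_S^0(f) − D_S^1(f)]`, where `D_S^0(f)` and `D_S^1(f)` are
the first-order divided differences of `f` of order `1_S` at the bottom and top corner
cells of the lattice. -/
theorem vdesign_upper_bound (d : ℕ) (nk : Fin d → ℕ) (hnk : ∀ k, 2 ≤ nk k)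
    (f : (Fin d → ℝ) → ℝ) (hf : MemTCP d f) :
    Vdesign d (latticePoint nk) f ≤
      ∑ S ∈ Finset.univ.filter (fun S : Finset (Fin d) => S.Nonempty),
        (mvDivDiff f (fun k => if k ∈ S then 1 else 0)
            (fun k j => (j : ℝ) / (nk k)) -
         mvDivDiff f (fun k => if k ∈ S then 1 else 0)
            (fun k j => if k ∈ S then ((nk k : ℝ) - 1 + (j : ℝ)) / (nk k) else 0)) := by
  have hn : ∀ k, 0 < nk k := fun k => by have := hnk k; omega
  have hinterp (i : ∀ k, Fin (nk k)) :
      (gridRep hn f).toFun d (latticePoint nk i) = f (latticePoint nk i) :=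
    gridRep_toFun_gridPoint hn hf fun k => (i k).castSucc
  have hbdd : BddBelow {v : ℝ | ∃ r : TCRep d,
      (∀ i, r.toFun d (latticePoint nk i) = f (latticePoint nk i)) ∧ v = r.V d} :=
    ⟨0, by rintro _ ⟨r, -, rfl⟩; exact sum_nonneg fun _ _ => ENNReal.toReal_nonneg⟩
  calc Vdesign d (latticePoint nk) f ≤ (gridRep hn f).V d := csInf_le hbdd ⟨_, hinterp, rfl⟩
    _ = _ := gridRep_V hn hf

end
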